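/- Let P be a Markov transition kernel on (X,B) with invariant probability measure π satisfying ⦀P^n − π⦀_{V^α} ≤ C0 ρ^n for all n (ρ ∈ (0,1), C0 < ∞), let θ ∈ [0,1), and let μ be a probability measure with μ(V^α) ≤ M < ∞. Set Q = θP + (1−θ)μ and π_Q = (1−θ) Σ_{i=0}^∞ θ^i μP^i. Then for all k ≥ 0, ⦀Q^k − π_Q⦀_{V^α} ≤ C θ^k ρ^k, where C = C0 (1 + (1−θ)M/(1−θρ)) depends only on C0, θ, ρ, M and not on μ otherwise. In particular, with μ = μ_n from the importance-resampling scheme (so that sup_n μ_n(V^α) < ∞), the kernels P_n = θP + (1−θ)μ_n satisfy ⦀P_n^k − π_n⦀_{V^α} ≤ C θ^k ρ^k with C independent of n and k. -/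

import Mathlib

/-!
Unrolling `Q^{k+1}(x,·) = ∫ Q^k(x,dy) Q(y,·)` gives
`Q^k(x,·) = θ^k P^k(x,·) + (1-θ) Σ_{i<k} θ^i μP^i`, while `π_Q` is the full series. Since both
families of weights have total mass one,
`Q^k g(x) - π_Q g = θ^k (P^k g(x) - π g) - (1-θ) Σ_{i≥k} θ^i (μP^i g - π g)`.
The ergodicity of `P` bounds the first bracket by `C0 ρ^k V^α(x)` and, integrated against `μ`,
the `i`-th term of the tail by `C0 ρ^i M`; the tail then sums to
`(1-θ) C0 M (θρ)^k / (1-θρ)`, which is at most that times `V^α(x)` because `V ≥ 1`.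

These manipulations need `V^α` to be integrable under `P^n(x,·)` and `μP^i`. This also comes
from the ergodicity bound: applied to the truncations `min(V^α, m)` at times `n` and `0` it gives
`P^n V^α ≤ (1 + 2 C0) V^α`, and monotone convergence removes the truncation.
-/

open MeasureTheory Filter
open scoped ENNReal

namespace MixtureKernelErgodicity

variable {X : Type*} [MeasurableSpace X] {Ω : Type*} [MeasurableSpace Ω]

/-- `iter P n` is the `n`-step transition kernel `P^n`. -/
noncomputable def iter (P : X → Measure X) : ℕ → X → Measure X
  | 0 => fun x => Measure.dirac x
  | n + 1 => fun x => (iter P n x).bind P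

/-- The mixture kernel `Q(x,·) = θ P(x,·) + (1−θ) μ(·)`. -/
noncomputable def mixK (P : X → Measure X) (μ : Measure X) (θ : ℝ) : X → Measure X :=
  fun x => ENNReal.ofReal θ • P x + ENNReal.ofReal (1 - θ) • μ

/-- The measure `π_Q = (1−θ) Σ_{i=0}^∞ θ^i μP^i`. -/
noncomputable def piQ (P : X → Measure X) (μ : Measure X) (θ : ℝ) : Measure X :=
  ENNReal.ofReal (1 - θ) •
    Measure.sum (fun i : ℕ => ENNReal.ofReal θ ^ i • μ.bind (iter P i))

/-- The (random) weighted empirical measure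
`Σ_{k<n} ω(Y_k) δ_{Y_k} / Σ_{j<n} ω(Y_j)` of the auxiliary chain. -/
noncomputable def empMeas (w : X → ℝ) (Y : ℕ → Ω → X) (n : ℕ) (ω : Ω) : Measure X :=
  ∑ k ∈ Finset.range n,
    ENNReal.ofReal (w (Y k ω) / ∑ j ∈ Finset.range n, w (Y j ω)) •
      Measure.dirac (Y k ω)

/-- `μ_n(A) = E[Σ_{k<n} ω(X_k^(0)) 1_A(X_k^(0)) / Σ_{j<n} ω(X_j^(0))]` of
the importance-resampling scheme. -/
noncomputable def muN (Pr : Measure Ω) (w : X → ℝ) (Y : ℕ → Ω → X) (n : ℕ) : Measure X :=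
  Pr.bind (empMeas w Y n)

section Bind

variable {α β : Type*} [MeasurableSpace α] [MeasurableSpace β] {κ : α → Measure β}

open ProbabilityTheory in
lemma bind_eq_comp_const (hκ : Measurable κ) (μ : Measure α) :
    μ.bind κ = (Kernel.mk κ hκ ∘ₖ Kernel.const Unit μ) () := by
  rw [← Measure.comp_eq_comp_const_apply]
  rfl

lemma integral_bind (hκ : Measurable κ) {μ : Measure α} {f : β → ℝ}
    (hf : Integrable f (μ.bind κ)) : ∫ y, f y ∂μ.bind κ = ∫ x, ∫ y, f y ∂κ x ∂μ := by
  rw [bind_eq_comp_const hκ] at hf ⊢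
  exact ProbabilityTheory.Kernel.integral_comp hf

lemma integrable_integral_bind (hκ : Measurable κ) {μ : Measure α} {f : β → ℝ}
    (hf : Integrable f (μ.bind κ)) : Integrable (fun x => ∫ y, f y ∂κ x) μ := by
  rw [bind_eq_comp_const hκ] at hf
  exact hf.integral_comp

lemma bind_add (hκ : Measurable κ) (μ ν : Measure α) :
    (μ + ν).bind κ = μ.bind κ + ν.bind κ := by
  ext s hs
  simp only [Measure.add_apply, Measure.bind_apply hs hκ.aemeasurable, lintegral_add_measure]

lemma bind_finset_sum {ι : Type*} (hκ : Measurable κ) (s : Finset ι) (μ : ι → Measure α) :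
    (∑ i ∈ s, μ i).bind κ = ∑ i ∈ s, (μ i).bind κ := by
  ext t ht
  simp only [Measure.finsetSum_apply, Measure.bind_apply ht hκ.aemeasurable,
    lintegral_finsetSum_measure]

end Bind

section WeightedIntegrability

variable {α : Type*} [MeasurableSpace α] {ν : Measure α} {W : α → ℝ}

lemma integrable_of_abs_le {f : α → ℝ} (hf : AEStronglyMeasurable f ν)
    (hfW : ∀ x, |f x| ≤ W x) (hW : ∫⁻ x, ENNReal.ofReal (W x) ∂ν ≠ ∞) : Integrable f ν := by
  refine ⟨hf, (lintegral_mono fun x => ?_).trans_lt hW.lt_top⟩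
  rw [Real.enorm_eq_ofReal_abs]
  exact ENNReal.ofReal_le_ofReal (hfW x)

lemma integral_le_of_lintegral_ofReal_le (hW0 : ∀ x, 0 ≤ W x) (hW : AEStronglyMeasurable W ν)
    {M : ℝ} (hM : 0 ≤ M) (h : ∫⁻ x, ENNReal.ofReal (W x) ∂ν ≤ ENNReal.ofReal M) :
    ∫ x, W x ∂ν ≤ M := by
  rw [integral_eq_lintegral_of_nonneg_ae (ae_of_all _ hW0) hW]
  exact ENNReal.toReal_le_of_le_ofReal hM h

lemma lintegral_ofReal_le_of_integral_min_le [IsFiniteMeasure ν] (hW : Measurable W)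
    (hW0 : ∀ x, 0 ≤ W x) {c : ℝ} (h : ∀ m : ℕ, ∫ x, min (W x) m ∂ν ≤ c) :
    ∫⁻ x, ENNReal.ofReal (W x) ∂ν ≤ ENNReal.ofReal c := by
  have hmin_nonneg (m : ℕ) (x : α) : 0 ≤ min (W x) m := le_min (hW0 x) m.cast_nonneg
  have hsup (x : α) : ENNReal.ofReal (W x) = ⨆ m : ℕ, ENNReal.ofReal (min (W x) m) := by
    refine le_antisymm ?_ (iSup_le fun m => ENNReal.ofReal_le_ofReal (min_le_left _ _))
    exact le_iSup_of_le ⌈W x⌉₊ (by rw [min_eq_left (Nat.le_ceil _)])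
  have hmono : Monotone fun (m : ℕ) (x : α) => ENNReal.ofReal (min (W x) m) :=
    fun m m' hm x => ENNReal.ofReal_le_ofReal (min_le_min le_rfl (Nat.cast_le.mpr hm))
  rw [lintegral_congr hsup, lintegral_iSup (fun m => (hW.min measurable_const).ennreal_ofReal)
    hmono]
  refine iSup_le fun m => ?_
  have hint : Integrable (fun x => min (W x) m) ν :=
    (integrable_const (m : ℝ)).mono' (hW.min measurable_const).aestronglyMeasurable
      (ae_of_all _ fun x => by
        rw [Real.norm_eq_abs, abs_of_nonneg (hmin_nonneg m x)]; exact min_le_right _ _)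
  rw [← ofReal_integral_eq_lintegral_ofReal hint (ae_of_all _ (hmin_nonneg m))]
  exact ENNReal.ofReal_le_ofReal (h m)

end WeightedIntegrability

lemma pow_add_mul_geom_sum {R : Type*} [CommSemiring R] {t s : R} (h : t + s = 1) (k : ℕ) :
    t ^ k + s * ∑ i ∈ Finset.range k, t ^ i = 1 := by
  induction k with
  | zero => simp
  | succ k ih =>
    calc t ^ (k + 1) + s * ∑ i ∈ Finset.range (k + 1), t ^ i
        = t ^ k * (t + s) + s * ∑ i ∈ Finset.range k, t ^ i := by
          rw [Finset.sum_range_succ]; ring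
      _ = 1 := by rw [h, mul_one, ih]

section Iterates

variable {P : X → Measure X}

lemma measurable_iter (hP : Measurable P) (n : ℕ) : Measurable (iter P n) := by
  induction n with
  | zero => exact Measure.measurable_dirac
  | succ n ih => exact (Measure.measurable_bind' hP).comp ih

lemma isProbabilityMeasure_iter (hP : Measurable P) [∀ x, IsProbabilityMeasure (P x)] (n : ℕ)
    (x : X) : IsProbabilityMeasure (iter P n x) := by
  induction n with
  | zero => exact Measure.dirac.isProbabilityMeasure
  | succ n ih => exact isProbabilityMeasure_bind hP.aemeasurable (ae_of_all _ inferInstance)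

lemma integral_iter_zero {f : X → ℝ} (hf : Measurable f) (x : X) :
    ∫ y, f y ∂iter P 0 x = f x :=
  integral_dirac' f x hf.stronglyMeasurable

lemma bind_iter_succ (hP : Measurable P) (μ : Measure X) (i : ℕ) :
    (μ.bind (iter P i)).bind P = μ.bind (iter P (i + 1)) :=
  Measure.bind_bind (measurable_iter hP i).aemeasurable hP.aemeasurable

end Iterates

section Mixture

variable {P : X → Measure X} {μ : Measure X} {θ : ℝ}

lemma measurable_mixK (hP : Measurable P) : Measurable (mixK P μ θ) := by
  refine Measure.measurable_of_measurable_coe _ fun s hs => ?_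
  simp only [mixK, Measure.add_apply, Measure.smul_apply, smul_eq_mul]
  exact ((Measure.measurable_coe hs).comp hP).const_mul _ |>.add_const _

lemma bind_mixK (hP : Measurable P) (m : Measure X) [IsProbabilityMeasure m] :
    m.bind (mixK P μ θ) = ENNReal.ofReal θ • m.bind P + ENNReal.ofReal (1 - θ) • μ := by
  ext s hs
  have hPs : Measurable fun x => P x s := (Measure.measurable_coe hs).comp hP
  simp only [Measure.bind_apply hs (measurable_mixK hP).aemeasurable, mixK, Measure.add_apply,
    Measure.smul_apply, smul_eq_mul, Measure.bind_apply hs hP.aemeasurable]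
  rw [lintegral_add_right _ measurable_const, lintegral_const_mul _ hPs, lintegral_const,
    measure_univ, mul_one]

lemma iter_mixK (hP : Measurable P) [∀ x, IsProbabilityMeasure (P x)] [IsProbabilityMeasure μ]
    (hθ0 : 0 ≤ θ) (hθ1 : θ ≤ 1) (k : ℕ) (x : X) :
    iter (mixK P μ θ) k x =
      ENNReal.ofReal θ ^ k • iter P k x +
        ENNReal.ofReal (1 - θ) •
          ∑ i ∈ Finset.range k, ENNReal.ofReal θ ^ i • μ.bind (iter P i) := by
  set t := ENNReal.ofReal θ
  set s := ENNReal.ofReal (1 - θ)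
  have hts : t + s = 1 := by
    rw [← ENNReal.ofReal_add hθ0 (by linarith), add_sub_cancel, ENNReal.ofReal_one]
  induction k with
  | zero => simp [iter]
  | succ k ih =>
    have hQ := measurable_mixK (μ := μ) (θ := θ) hP
    have hbind (i : ℕ) : (μ.bind (iter P i)).bind (mixK P μ θ) =
        t • μ.bind (iter P (i + 1)) + s • μ := by
      have := isProbabilityMeasure_bind (measurable_iter hP i).aemeasurable
        (ae_of_all μ (isProbabilityMeasure_iter hP i))
      rw [bind_mixK hP, bind_iter_succ hP]
    have := isProbabilityMeasure_iter hP k x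
    have hbind_iter : (iter P k x).bind (mixK P μ θ) = t • iter P (k + 1) x + s • μ :=
      bind_mixK hP _
    have hμ_coeff : t ^ k * s + ∑ i ∈ Finset.range k, s * (t ^ i * s) = s := by
      calc t ^ k * s + ∑ i ∈ Finset.range k, s * (t ^ i * s)
          = (t ^ k + s * ∑ i ∈ Finset.range k, t ^ i) * s := by
            simp only [Finset.mul_sum, add_mul, Finset.sum_mul, mul_assoc]
        _ = s := by rw [pow_add_mul_geom_sum hts, one_mul]
    calc iter (mixK P μ θ) (k + 1) x
        = t ^ k • (iter P k x).bind (mixK P μ θ) +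
            s • ∑ i ∈ Finset.range k, t ^ i • (μ.bind (iter P i)).bind (mixK P μ θ) := by
          change (iter (mixK P μ θ) k x).bind _ = _
          rw [ih, bind_add hQ, Measure.bind_smul, Measure.bind_smul, bind_finset_sum hQ]
          simp only [Measure.bind_smul]
      _ = t ^ (k + 1) • iter P (k + 1) x +
            s • (∑ i ∈ Finset.range k, t ^ (i + 1) • μ.bind (iter P (i + 1))) +
            ((t ^ k * s) • μ + ∑ i ∈ Finset.range k, (s * (t ^ i * s)) • μ) := by
          simp only [hbind_iter, hbind, smul_add, Finset.sum_add_distrib, Finset.smul_sum,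
            smul_smul, pow_succ]
          abel
      _ = t ^ (k + 1) • iter P (k + 1) x +
            s • ∑ i ∈ Finset.range (k + 1), t ^ i • μ.bind (iter P i) := by
          rw [← Finset.sum_smul, ← add_smul, hμ_coeff, Finset.sum_range_succ', pow_zero,
            one_smul, smul_add, add_assoc]
          simp only [iter, Measure.bind_dirac]

end Mixture

section MixtureIntegrals

variable {P : X → Measure X} {μ : Measure X} {θ : ℝ} {g : X → ℝ}

lemma integral_iter_mixK (hP : Measurable P) [∀ x, IsProbabilityMeasure (P x)]
    [IsProbabilityMeasure μ] (hθ0 : 0 ≤ θ) (hθ1 : θ ≤ 1) {k : ℕ} {x : X}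
    (hgk : Integrable g (iter P k x)) (hgi : ∀ i, Integrable g (μ.bind (iter P i))) :
    ∫ y, g y ∂iter (mixK P μ θ) k x =
      θ ^ k * ∫ y, g y ∂iter P k x +
        (1 - θ) * ∑ i ∈ Finset.range k, θ ^ i * ∫ y, g y ∂μ.bind (iter P i) := by
  have hpow (i : ℕ) : ENNReal.ofReal θ ^ i ≠ ∞ := ENNReal.pow_ne_top ENNReal.ofReal_ne_top
  rw [iter_mixK hP hθ0 hθ1, integral_add_measure ((hgk.smul_measure (hpow k)))
    ((integrable_finsetSum_measure.mpr fun i _ => (hgi i).smul_measure (hpow i)).smul_measure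
      ENNReal.ofReal_ne_top),
    integral_smul_measure, integral_smul_measure,
    integral_finsetSum_measure fun i _ => (hgi i).smul_measure (hpow i)]
  simp only [integral_smul_measure, ENNReal.toReal_pow, ENNReal.toReal_ofReal hθ0,
    ENNReal.toReal_ofReal (sub_nonneg.mpr hθ1), smul_eq_mul]

lemma integral_piQ (hθ0 : 0 ≤ θ) (hθ1 : θ < 1) {W : X → ℝ} (hg : Measurable g)
    (hgW : ∀ x, |g x| ≤ W x) {B : ℝ}
    (hB : ∀ i, ∫⁻ y, ENNReal.ofReal (W y) ∂μ.bind (iter P i) ≤ ENNReal.ofReal B) :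
    ∫ y, g y ∂piQ P μ θ = (1 - θ) * ∑' i, θ ^ i * ∫ y, g y ∂μ.bind (iter P i) := by
  set t := ENNReal.ofReal θ
  have hmass : ∫⁻ y, ENNReal.ofReal (W y) ∂Measure.sum (fun i => t ^ i • μ.bind (iter P i)) ≤
      (1 - t)⁻¹ * ENNReal.ofReal B :=
    calc ∫⁻ y, ENNReal.ofReal (W y) ∂Measure.sum (fun i => t ^ i • μ.bind (iter P i))
        = ∑' i, t ^ i * ∫⁻ y, ENNReal.ofReal (W y) ∂μ.bind (iter P i) := by
          simp only [lintegral_sum_measure, lintegral_smul_measure, smul_eq_mul]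
      _ ≤ ∑' i, t ^ i * ENNReal.ofReal B := ENNReal.tsum_le_tsum fun i => by gcongr; exact hB i
      _ = (1 - t)⁻¹ * ENNReal.ofReal B := by rw [ENNReal.tsum_mul_right, ENNReal.tsum_geometric]
  have ht : (1 - t)⁻¹ ≠ ∞ :=
    ENNReal.inv_ne_top.mpr (tsub_pos_iff_lt.mpr (ENNReal.ofReal_lt_one.mpr hθ1)).ne'
  have hsum : Integrable g (Measure.sum fun i => t ^ i • μ.bind (iter P i)) :=
    integrable_of_abs_le hg.aestronglyMeasurable hgW
      (ne_top_of_le_ne_top (ENNReal.mul_ne_top ht ENNReal.ofReal_ne_top) hmass)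
  rw [piQ, integral_smul_measure, integral_sum_measure hsum]
  simp only [integral_smul_measure, ENNReal.toReal_pow, ENNReal.toReal_ofReal hθ0,
    ENNReal.toReal_ofReal (sub_nonneg.mpr hθ1.le), smul_eq_mul, t]

end MixtureIntegrals

section GeometricSeries

variable {θ ρ K : ℝ} {d : ℕ → ℝ}

lemma norm_pow_mul_le (hθ0 : 0 ≤ θ) (hd : ∀ i, |d i| ≤ K * ρ ^ i) (i : ℕ) :
    ‖θ ^ i * d i‖ ≤ K * (θ * ρ) ^ i := by
  rw [Real.norm_eq_abs, abs_mul, abs_of_nonneg (pow_nonneg hθ0 i), mul_pow]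
  calc θ ^ i * |d i| ≤ θ ^ i * (K * ρ ^ i) := by gcongr; exact hd i
    _ = K * (θ ^ i * ρ ^ i) := by ring

lemma summable_pow_mul_of_abs_le (hθ0 : 0 ≤ θ) (hρ0 : 0 ≤ ρ) (hθρ : θ * ρ < 1)
    (hd : ∀ i, |d i| ≤ K * ρ ^ i) : Summable fun i => θ ^ i * d i :=
  .of_norm_bounded ((summable_geometric_of_lt_one (by positivity) hθρ).mul_left K)
    (norm_pow_mul_le hθ0 hd)

lemma abs_tsum_pow_mul_tail_le (hθ0 : 0 ≤ θ) (hρ0 : 0 ≤ ρ) (hθρ : θ * ρ < 1)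
    (hd : ∀ i, |d i| ≤ K * ρ ^ i) (k : ℕ) :
    |∑' i, θ ^ (i + k) * d (i + k)| ≤ K * (θ * ρ) ^ k / (1 - θ * ρ) := by
  have hgeom : HasSum (fun i => K * (θ * ρ) ^ (i + k)) (K * (θ * ρ) ^ k / (1 - θ * ρ)) := by
    rw [show (fun i => K * (θ * ρ) ^ (i + k)) = fun i => K * (θ * ρ) ^ k * (θ * ρ) ^ i from
      funext fun i => by ring, div_eq_mul_inv]
    exact (hasSum_geometric_of_lt_one (by positivity) hθρ).mul_left _
  exact tsum_of_norm_bounded hgeom fun i => norm_pow_mul_le hθ0 hd (i + k)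

end GeometricSeries

lemma mixture_sub_eq {θ p b : ℝ} {a : ℕ → ℝ} (hθ0 : 0 ≤ θ) (hθ1 : θ < 1)
    (ha : Summable fun i => θ ^ i * a i) (k : ℕ) :
    θ ^ k * p + (1 - θ) * ∑ i ∈ Finset.range k, θ ^ i * a i - (1 - θ) * ∑' i, θ ^ i * a i =
      θ ^ k * (p - b) - (1 - θ) * ∑' i, θ ^ (i + k) * (a (i + k) - b) := by
  have htail : Summable fun i => θ ^ (i + k) * a (i + k) := (summable_nat_add_iff k).mpr ha
  have hgeom : HasSum (fun i => θ ^ (i + k) * b) (θ ^ k * b / (1 - θ)) := by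
    rw [show (fun i => θ ^ (i + k) * b) = fun i => θ ^ k * b * θ ^ i from
      funext fun i => by ring, div_eq_mul_inv]
    exact (hasSum_geometric_of_lt_one hθ0 hθ1).mul_left _
  have hsplit : ∑' i, θ ^ (i + k) * (a (i + k) - b) =
      ∑' i, θ ^ (i + k) * a (i + k) - θ ^ k * b / (1 - θ) := by
    rw [← hgeom.tsum_eq, ← htail.tsum_sub hgeom.summable]
    simp only [mul_sub]
  have hθ : 1 - θ ≠ 0 := by linarith
  rw [hsplit, ← ha.sum_add_tsum_nat_add k]
  field_simp
  ring

lemma abs_mixture_sub_le {θ ρ C M V p b : ℝ} {a : ℕ → ℝ} {k : ℕ} (hθ0 : 0 ≤ θ) (hθ1 : θ < 1)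
    (hρ0 : 0 ≤ ρ) (hρ1 : ρ ≤ 1) (hC : 0 ≤ C) (hM : 0 ≤ M) (hV : 1 ≤ V)
    (hp : |p - b| ≤ C * ρ ^ k * V) (ha : ∀ i, |a i - b| ≤ C * ρ ^ i * M) :
    |θ ^ k * p + (1 - θ) * ∑ i ∈ Finset.range k, θ ^ i * a i - (1 - θ) * ∑' i, θ ^ i * a i| ≤
      C * (1 + (1 - θ) * M / (1 - θ * ρ)) * θ ^ k * ρ ^ k * V := by
  have hθρ : θ * ρ < 1 := by nlinarith
  have hd (i : ℕ) : |a i - b| ≤ C * M * ρ ^ i := (ha i).trans_eq (by ring)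
  have hsum : Summable fun i => θ ^ i * a i :=
    ((summable_pow_mul_of_abs_le hθ0 hρ0 hθρ hd).add
      ((summable_geometric_of_lt_one hθ0 hθ1).mul_right b)).congr fun i => by ring
  set T := C * M * (θ * ρ) ^ k / (1 - θ * ρ)
  have hT : 0 ≤ T := div_nonneg (by positivity) (by linarith)
  have htail : |∑' i, θ ^ (i + k) * (a (i + k) - b)| ≤ T :=
    abs_tsum_pow_mul_tail_le hθ0 hρ0 hθρ hd k
  rw [mixture_sub_eq hθ0 hθ1 hsum k (b := b)]
  calc |θ ^ k * (p - b) - (1 - θ) * ∑' i, θ ^ (i + k) * (a (i + k) - b)|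
      ≤ |θ ^ k * (p - b)| + |(1 - θ) * ∑' i, θ ^ (i + k) * (a (i + k) - b)| := abs_sub _ _
    _ ≤ θ ^ k * (C * ρ ^ k * V) + (1 - θ) * T := by
        rw [abs_mul, abs_mul, abs_of_nonneg (pow_nonneg hθ0 k),
          abs_of_nonneg (sub_nonneg.mpr hθ1.le)]
        gcongr
    _ ≤ θ ^ k * (C * ρ ^ k * V) + (1 - θ) * T * V := by
        have := le_mul_of_one_le_right (mul_nonneg (sub_nonneg.mpr hθ1.le) hT) hV
        linarith
    _ = C * (1 + (1 - θ) * M / (1 - θ * ρ)) * θ ^ k * ρ ^ k * V := by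
        simp only [T, mul_pow]
        ring

/-- `⦀P^n − π⦀_W ≤ C ρ^n` for all `n`, in the weighted sup-norm `|f|_W = sup_x |f x| / W x`. -/
def WeightedGeomErgodic (P : X → Measure X) (π : Measure X) (W : X → ℝ) (C ρ : ℝ) : Prop :=
  ∀ f : X → ℝ, Measurable f → (∀ x, |f x| ≤ W x) →
    ∀ (n : ℕ) (x : X), |∫ y, f y ∂iter P n x - ∫ y, f y ∂π| ≤ C * ρ ^ n * W x

namespace WeightedGeomErgodic

variable {P : X → Measure X} {π : Measure X} {W : X → ℝ} {C ρ : ℝ}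

lemma abs_integral_iter_le (hA : WeightedGeomErgodic P π W C ρ) {f : X → ℝ} (hf : Measurable f)
    (hfW : ∀ x, |f x| ≤ W x) (n : ℕ) (x : X) :
    |∫ y, f y ∂iter P n x| ≤ (1 + C + C * ρ ^ n) * W x := by
  have hn := abs_le.mp (hA f hf hfW n x)
  have h0 := hA f hf hfW 0 x
  rw [integral_iter_zero hf, pow_zero, mul_one] at h0
  have h0' := abs_le.mp h0
  have hx := abs_le.mp (hfW x)
  rw [abs_le]
  constructor <;> linarith

lemma lintegral_iter_le (hA : WeightedGeomErgodic P π W C ρ) (hP : Measurable P)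
    [∀ x, IsProbabilityMeasure (P x)] (hW : Measurable W) (hW0 : ∀ x, 0 ≤ W x) (n : ℕ) (x : X) :
    ∫⁻ y, ENNReal.ofReal (W y) ∂iter P n x ≤ ENNReal.ofReal ((1 + C + C * ρ ^ n) * W x) := by
  have := isProbabilityMeasure_iter hP n x
  refine lintegral_ofReal_le_of_integral_min_le hW hW0 fun m => ?_
  have hminW (y : X) : |min (W y) m| ≤ W y := by
    rw [abs_of_nonneg (le_min (hW0 y) m.cast_nonneg)]
    exact min_le_left _ _
  exact (le_abs_self _).trans (hA.abs_integral_iter_le (hW.min measurable_const) hminW n x)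

lemma lintegral_bind_iter_le (hA : WeightedGeomErgodic P π W C ρ) (hP : Measurable P)
    [∀ x, IsProbabilityMeasure (P x)] (hW : Measurable W) (hW0 : ∀ x, 0 ≤ W x) (hC : 0 ≤ C)
    (hρ0 : 0 ≤ ρ) (hρ1 : ρ ≤ 1) {μ : Measure X} {M : ℝ}
    (hμW : ∫⁻ y, ENNReal.ofReal (W y) ∂μ ≤ ENNReal.ofReal M) (i : ℕ) :
    ∫⁻ y, ENNReal.ofReal (W y) ∂μ.bind (iter P i) ≤ ENNReal.ofReal ((1 + 2 * C) * M) := by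
  have hWm : Measurable fun y => ENNReal.ofReal (W y) := hW.ennreal_ofReal
  have hcoeff : 1 + C + C * ρ ^ i ≤ 1 + 2 * C := by
    nlinarith [mul_le_mul_of_nonneg_left (pow_le_one₀ hρ0 hρ1 : ρ ^ i ≤ 1) hC]
  rw [Measure.lintegral_bind (measurable_iter hP i).aemeasurable hWm.aemeasurable,
    ENNReal.ofReal_mul (by linarith)]
  calc ∫⁻ z, ∫⁻ y, ENNReal.ofReal (W y) ∂iter P i z ∂μ
      ≤ ∫⁻ z, ENNReal.ofReal (1 + 2 * C) * ENNReal.ofReal (W z) ∂μ := by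
        refine lintegral_mono fun z => (hA.lintegral_iter_le hP hW hW0 i z).trans ?_
        rw [← ENNReal.ofReal_mul (by linarith)]
        exact ENNReal.ofReal_le_ofReal (mul_le_mul_of_nonneg_right hcoeff (hW0 z))
    _ ≤ ENNReal.ofReal (1 + 2 * C) * ENNReal.ofReal M := by
        rw [lintegral_const_mul _ hWm]
        gcongr

lemma abs_integral_bind_iter_sub_le (hA : WeightedGeomErgodic P π W C ρ) (hP : Measurable P)
    (hW : Measurable W) (hW0 : ∀ x, 0 ≤ W x) (hC : 0 ≤ C) (hρ0 : 0 ≤ ρ)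
    {μ : Measure X} [IsProbabilityMeasure μ] {M : ℝ} (hM : 0 ≤ M)
    (hμW : ∫⁻ y, ENNReal.ofReal (W y) ∂μ ≤ ENNReal.ofReal M)
    {g : X → ℝ} (hg : Measurable g) (hgW : ∀ x, |g x| ≤ W x) {i : ℕ}
    (hgi : Integrable g (μ.bind (iter P i))) :
    |∫ y, g y ∂μ.bind (iter P i) - ∫ y, g y ∂π| ≤ C * ρ ^ i * M := by
  have hWμ : Integrable W μ := integrable_of_abs_le hW.aestronglyMeasurable
    (fun x => (abs_of_nonneg (hW0 x)).le) (ne_top_of_le_ne_top ENNReal.ofReal_ne_top hμW)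
  have hCρ : 0 ≤ C * ρ ^ i := mul_nonneg hC (pow_nonneg hρ0 i)
  have hsub : ∫ z, ∫ y, g y ∂iter P i z ∂μ - ∫ y, g y ∂π =
      ∫ z, (∫ y, g y ∂iter P i z - ∫ y, g y ∂π) ∂μ := by
    rw [integral_sub (integrable_integral_bind (measurable_iter hP i) hgi) (integrable_const _),
      integral_const, probReal_univ, one_smul]
  rw [integral_bind (measurable_iter hP i) hgi, hsub]
  calc |∫ z, (∫ y, g y ∂iter P i z - ∫ y, g y ∂π) ∂μ|
      ≤ ∫ z, C * ρ ^ i * W z ∂μ :=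
        norm_integral_le_of_norm_le (hWμ.const_mul _)
          (ae_of_all _ fun z => (Real.norm_eq_abs _).trans_le (hA g hg hgW i z))
    _ = C * ρ ^ i * ∫ z, W z ∂μ := integral_const_mul _ _
    _ ≤ C * ρ ^ i * M := mul_le_mul_of_nonneg_left
        (integral_le_of_lintegral_ofReal_le hW0 hW.aestronglyMeasurable hM hμW) hCρ

lemma abs_integral_iter_mixK_sub_integral_piQ_le (hA : WeightedGeomErgodic P π W C ρ)
    (hP : Measurable P) [∀ x, IsProbabilityMeasure (P x)] (hW : Measurable W)
    (hW1 : ∀ x, 1 ≤ W x) (hC : 0 ≤ C) (hρ0 : 0 ≤ ρ) (hρ1 : ρ ≤ 1) {θ : ℝ} (hθ0 : 0 ≤ θ)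
    (hθ1 : θ < 1) {μ : Measure X} [IsProbabilityMeasure μ] {M : ℝ} (hM : 0 ≤ M)
    (hμW : ∫⁻ y, ENNReal.ofReal (W y) ∂μ ≤ ENNReal.ofReal M) {g : X → ℝ} (hg : Measurable g)
    (hgW : ∀ x, |g x| ≤ W x) (k : ℕ) (x : X) :
    |∫ y, g y ∂iter (mixK P μ θ) k x - ∫ y, g y ∂piQ P μ θ| ≤
      C * (1 + (1 - θ) * M / (1 - θ * ρ)) * θ ^ k * ρ ^ k * W x := by
  have hW0 (x : X) : 0 ≤ W x := zero_le_one.trans (hW1 x)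
  have hbind := hA.lintegral_bind_iter_le hP hW hW0 hC hρ0 hρ1 hμW
  have hgk : Integrable g (iter P k x) := integrable_of_abs_le hg.aestronglyMeasurable hgW
    (ne_top_of_le_ne_top ENNReal.ofReal_ne_top (hA.lintegral_iter_le hP hW hW0 k x))
  have hgi (i : ℕ) : Integrable g (μ.bind (iter P i)) := integrable_of_abs_le
    hg.aestronglyMeasurable hgW (ne_top_of_le_ne_top ENNReal.ofReal_ne_top (hbind i))
  rw [integral_iter_mixK hP hθ0 hθ1.le hgk hgi, integral_piQ hθ0 hθ1 hg hgW hbind]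
  exact abs_mixture_sub_le hθ0 hθ1 hρ0 hρ1 hC hM (hW1 x) (hA g hg hgW k x) fun i =>
    hA.abs_integral_bind_iter_sub_le hP hW hW0 hC hρ0 hM hμW hg hgW (hgi i)

end WeightedGeomErgodic

section EmpiricalMeasure

variable {w : X → ℝ}

lemma measurable_empMeas {Y : ℕ → Ω → X} (hw : Measurable w) (hY : ∀ k, Measurable (Y k)) (n : ℕ) :
    Measurable (empMeas w Y n) := by
  refine Measure.measurable_of_measurable_coe _ fun s hs => ?_
  simp only [empMeas, Measure.finsetSum_apply, Measure.smul_apply, smul_eq_mul,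
    Measure.dirac_apply' _ hs]
  refine Finset.measurable_sum _ fun k _ => Measurable.mul ?_ ?_
  · exact ((hw.comp (hY k)).div
      (Finset.measurable_sum _ fun j _ => hw.comp (hY j))).ennreal_ofReal
  · exact (measurable_one.indicator hs).comp (hY k)

lemma isProbabilityMeasure_empMeas {S : Type*} {Y : ℕ → S → X} (hw0 : ∀ x, 0 < w x) {n : ℕ}
    (hn : 1 ≤ n) (ω : S) : IsProbabilityMeasure (empMeas w Y n ω) := by
  have hW : 0 < ∑ j ∈ Finset.range n, w (Y j ω) :=
    Finset.sum_pos (fun j _ => hw0 _) (Finset.nonempty_range_iff.mpr (by omega))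
  constructor
  simp only [empMeas, Measure.finsetSum_apply, Measure.smul_apply, smul_eq_mul, measure_univ,
    mul_one]
  rw [← ENNReal.ofReal_sum_of_nonneg fun k _ => div_nonneg (hw0 _).le hW.le, ← Finset.sum_div,
    div_self hW.ne', ENNReal.ofReal_one]

lemma isProbabilityMeasure_muN {Pr : Measure Ω} [IsProbabilityMeasure Pr] {Y : ℕ → Ω → X}
    (hw : Measurable w) (hw0 : ∀ x, 0 < w x) (hY : ∀ k, Measurable (Y k)) {n : ℕ} (hn : 1 ≤ n) :
    IsProbabilityMeasure (muN Pr w Y n) :=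
  isProbabilityMeasure_bind (measurable_empMeas hw hY n).aemeasurable
    (ae_of_all _ (isProbabilityMeasure_empMeas hw0 hn))

end EmpiricalMeasure

theorem mixture_kernel_geometric_ergodicity_general
    (P : X → Measure X) (hPmeas : Measurable P)
    (hPprob : ∀ x, IsProbabilityMeasure (P x))
    (π : Measure X)
    (V : X → ℝ) (hVmeas : Measurable V) (hV1 : ∀ x, 1 ≤ V x)
    (α : ℝ) (hα0 : 0 ≤ α)
    (ρ C0 : ℝ) (hρ0 : 0 < ρ) (hρ1 : ρ < 1) (hC0 : 0 ≤ C0)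
    -- `⦀P^n − π⦀_{V^α} ≤ C0 ρ^n` for all `n ≥ 0`
    (hA : ∀ f : X → ℝ, Measurable f → (∀ x, |f x| ≤ V x ^ α) →
      ∀ (n : ℕ) (x : X),
        |∫ y, f y ∂(iter P n x) - ∫ y, f y ∂π| ≤ C0 * ρ ^ n * V x ^ α)
    (θ : ℝ) (hθ0 : 0 ≤ θ) (hθ1 : θ < 1)
    -- the importance-resampling ingredients used in the second part
    (Pr : Measure Ω) (hPr : IsProbabilityMeasure Pr)
    (w : X → ℝ) (hwmeas : Measurable w) (hwpos : ∀ x, 0 < w x)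
    (Y : ℕ → Ω → X) (hYmeas : ∀ n, Measurable (Y n)) :
    -- main part: the bound with the explicit constant `C = C0 (1 + (1−θ)M/(1−θρ))`
    (∀ μ : Measure X, IsProbabilityMeasure μ →
      ∀ M : ℝ, 0 ≤ M →
        (∫⁻ x, ENNReal.ofReal (V x ^ α) ∂μ ≤ ENNReal.ofReal M) →
        ∀ (k : ℕ) (g : X → ℝ), Measurable g → (∀ x, |g x| ≤ V x ^ α) →
          ∀ x, |∫ y, g y ∂(iter (mixK P μ θ) k x) - ∫ y, g y ∂(piQ P μ θ)| ≤
            C0 * (1 + (1 - θ) * M / (1 - θ * ρ)) * θ ^ k * ρ ^ k * V x ^ α) ∧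
    -- "in particular": with `μ = μ_n`, `P_n = θP + (1−θ)μ_n` and invariant law `π_n`,
    -- the same bound holds with a constant independent of `n` and `k`
    (∀ M : ℝ, 0 ≤ M →
      (∀ n : ℕ, 1 ≤ n →
        ∫⁻ x, ENNReal.ofReal (V x ^ α) ∂(muN Pr w Y n) ≤ ENNReal.ofReal M) →
      ∀ n : ℕ, 1 ≤ n →
        ∀ (k : ℕ) (g : X → ℝ), Measurable g → (∀ x, |g x| ≤ V x ^ α) →
          ∀ x, |∫ y, g y ∂(iter (mixK P (muN Pr w Y n) θ) k x) -
              ∫ y, g y ∂(piQ P (muN Pr w Y n) θ)| ≤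
            C0 * (1 + (1 - θ) * M / (1 - θ * ρ)) * θ ^ k * ρ ^ k * V x ^ α) := by
  have hA' : WeightedGeomErgodic P π (fun x => V x ^ α) C0 ρ := hA
  have hW1 (x : X) : 1 ≤ V x ^ α := Real.one_le_rpow (hV1 x) hα0
  have bound (μ : Measure X) (hμ : IsProbabilityMeasure μ) {M : ℝ} (hM : 0 ≤ M)
      (hμV : ∫⁻ x, ENNReal.ofReal (V x ^ α) ∂μ ≤ ENNReal.ofReal M) {g : X → ℝ}
      (hg : Measurable g) (hgV : ∀ x, |g x| ≤ V x ^ α) (k : ℕ) (x : X) :=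
    hA'.abs_integral_iter_mixK_sub_integral_piQ_le hPmeas (hVmeas.pow_const α) hW1 hC0 hρ0.le
      hρ1.le hθ0 hθ1 hM hμV hg hgV k x
  refine ⟨fun μ hμ M hM hμV k g hg hgV x => bound μ hμ hM hμV hg hgV k x,
    fun M hM hμV n hn k g hg hgV x => ?_⟩
  exact bound _ (isProbabilityMeasure_muN hwmeas hwpos hYmeas hn) hM (hμV n hn) hg hgV k x

/-- Let `P` have invariant probability `π` with
`⦀P^n − π⦀_{V^α} ≤ C0 ρ^n`, `θ ∈ [0,1)`, and let `μ` be a probability measure with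
`μ(V^α) ≤ M < ∞`.  Set `Q = θP + (1−θ)μ` and `π_Q = (1−θ) Σ_{i≥0} θ^i μP^i`.  Then for all
`k ≥ 0`, `⦀Q^k − π_Q⦀_{V^α} ≤ C θ^k ρ^k` with `C = C0 (1 + (1−θ)M/(1−θρ))`, which depends
only on `C0, θ, ρ, M`.  In particular, with `μ = μ_n` from the importance-resampling scheme
(so that `sup_n μ_n(V^α) < ∞`), the kernels `P_n = θP + (1−θ)μ_n` satisfy
`⦀P_n^k − π_n⦀_{V^α} ≤ C θ^k ρ^k` with `C` independent of `n` and `k`. -/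
theorem mixture_kernel_geometric_ergodicity
    (P : X → Measure X) (hPmeas : Measurable P)
    (hPprob : ∀ x, IsProbabilityMeasure (P x))
    (π : Measure X) (hπ : IsProbabilityMeasure π) (hinv : π.bind P = π)
    (V : X → ℝ) (hVmeas : Measurable V) (hV1 : ∀ x, 1 ≤ V x)
    (α : ℝ) (hα0 : 0 ≤ α) (hα1 : α ≤ 1)
    (ρ C0 : ℝ) (hρ0 : 0 < ρ) (hρ1 : ρ < 1) (hC0 : 0 ≤ C0)
    -- `⦀P^n − π⦀_{V^α} ≤ C0 ρ^n` for all `n ≥ 0`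
    (hA : ∀ f : X → ℝ, Measurable f → (∀ x, |f x| ≤ V x ^ α) →
      ∀ (n : ℕ) (x : X),
        |∫ y, f y ∂(iter P n x) - ∫ y, f y ∂π| ≤ C0 * ρ ^ n * V x ^ α)
    (θ : ℝ) (hθ0 : 0 ≤ θ) (hθ1 : θ < 1)
    -- the importance-resampling ingredients used in the second part
    (Pr : Measure Ω) (hPr : IsProbabilityMeasure Pr)
    (w : X → ℝ) (hwmeas : Measurable w) (hwpos : ∀ x, 0 < w x)
    (Y : ℕ → Ω → X) (hYmeas : ∀ n, Measurable (Y n)) :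
    -- main part: the bound with the explicit constant `C = C0 (1 + (1−θ)M/(1−θρ))`
    (∀ μ : Measure X, IsProbabilityMeasure μ →
      ∀ M : ℝ, 0 ≤ M →
        (∫⁻ x, ENNReal.ofReal (V x ^ α) ∂μ ≤ ENNReal.ofReal M) →
        ∀ (k : ℕ) (g : X → ℝ), Measurable g → (∀ x, |g x| ≤ V x ^ α) →
          ∀ x, |∫ y, g y ∂(iter (mixK P μ θ) k x) - ∫ y, g y ∂(piQ P μ θ)| ≤
            C0 * (1 + (1 - θ) * M / (1 - θ * ρ)) * θ ^ k * ρ ^ k * V x ^ α) ∧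
    -- "in particular": with `μ = μ_n`, `P_n = θP + (1−θ)μ_n` and invariant law `π_n`,
    -- the same bound holds with a constant independent of `n` and `k`
    (∀ M : ℝ, 0 ≤ M →
      (∀ n : ℕ, 1 ≤ n →
        ∫⁻ x, ENNReal.ofReal (V x ^ α) ∂(muN Pr w Y n) ≤ ENNReal.ofReal M) →
      ∀ n : ℕ, 1 ≤ n →
        ∀ (k : ℕ) (g : X → ℝ), Measurable g → (∀ x, |g x| ≤ V x ^ α) →
          ∀ x, |∫ y, g y ∂(iter (mixK P (muN Pr w Y n) θ) k x) -
              ∫ y, g y ∂(piQ P (muN Pr w Y n) θ)| ≤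
            C0 * (1 + (1 - θ) * M / (1 - θ * ρ)) * θ ^ k * ρ ^ k * V x ^ α) :=
  mixture_kernel_geometric_ergodicity_general P hPmeas hPprob π V hVmeas hV1 α hα0 ρ C0 hρ0 hρ1 hC0
    hA θ hθ0 hθ1 Pr hPr w hwmeas hwpos Y hYmeas

end MixtureKernelErgodicity
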